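/- arXiv:1710.01443 — 4 statements merged into one kernel-verified Lean document; each statement's English description precedes it below -/
import Mathlib

section
/- The function ψ(z) = z(1 + iz/3)/(1 − iz/3) satisfies ψ(0) = 0, ψ'(0) = 1, and Re(zψ'(z)/ψ(z)) > 0 for all z in the open unit disk with z ≠ 0; hence ψ is starlike. -/
open Complex

noncomputable def ψ : ℂ → ℂ := fun z => z * (1 + I * z / 3) / (1 - I * z / 3)

/-!
With `w = i z / 3`, the logarithmic derivative of `ψ` is `z ψ'(z) / ψ(z) = 1 + 2w / (1 - w²)`.
On the unit disk `|w| < 1/3`, so `|2w / (1 - w²)| ≤ 2|w| / (1 - |w|²) < 1`, and a perturbation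
of `1` of modulus less than `1` has positive real part.
-/

lemma Complex.one_add_re_pos_of_norm_lt_one {u : ℂ} (hu : ‖u‖ < 1) : 0 < (1 + u).re := by
  rw [add_re, one_re]
  linarith [neg_abs_le u.re, abs_re_le_norm u]

lemma Complex.norm_two_mul_div_one_sub_sq_lt_one {w : ℂ} (hw : ‖w‖ ^ 2 + 2 * ‖w‖ < 1) :
    ‖2 * w / (1 - w ^ 2)‖ < 1 := by
  have hlow : 1 - ‖w‖ ^ 2 ≤ ‖1 - w ^ 2‖ := by
    have := norm_sub_norm_le (1 : ℂ) (w ^ 2)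
    rw [norm_one, norm_pow] at this
    linarith
  have hpos : 0 < ‖1 - w ^ 2‖ := by nlinarith [norm_nonneg w]
  rw [norm_div, norm_mul, Complex.norm_two, div_lt_one hpos]
  linarith

noncomputable def mobiusMul (c : ℂ) : ℂ → ℂ := fun z => z * (1 + c * z) / (1 - c * z)

lemma hasDerivAt_mobiusMul (c z : ℂ) (h : 1 - c * z ≠ 0) :
    HasDerivAt (mobiusMul c) ((1 + 2 * (c * z) - (c * z) ^ 2) / (1 - c * z) ^ 2) z := by
  have hnum : HasDerivAt (fun z => z * (1 + c * z)) (1 * (1 + c * z) + z * (c * 1)) z :=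
    (hasDerivAt_id z).mul (((hasDerivAt_id z).const_mul c).const_add 1)
  have hden : HasDerivAt (fun z => 1 - c * z) (-(c * 1)) z :=
    ((hasDerivAt_id z).const_mul c).const_sub 1
  refine (hnum.div hden h).congr_deriv ?_
  field_simp
  ring

lemma mul_deriv_mobiusMul_div {c z : ℂ} (hz : z ≠ 0) (hsub : 1 - c * z ≠ 0)
    (hadd : 1 + c * z ≠ 0) :
    z * deriv (mobiusMul c) z / mobiusMul c z = 1 + 2 * (c * z) / (1 - (c * z) ^ 2) := by
  have hsq : 1 - (c * z) ^ 2 ≠ 0 := by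
    rw [show 1 - (c * z) ^ 2 = (1 - c * z) * (1 + c * z) by ring]
    exact mul_ne_zero hsub hadd
  rw [(hasDerivAt_mobiusMul c z hsub).deriv, mobiusMul]
  generalize c * z = w at *
  field_simp
  ring

lemma re_mul_deriv_mobiusMul_div_pos {c z : ℂ} (hz : z ≠ 0)
    (h : ‖c * z‖ ^ 2 + 2 * ‖c * z‖ < 1) :
    0 < (z * deriv (mobiusMul c) z / mobiusMul c z).re := by
  have hlt : ‖c * z‖ < 1 := by nlinarith [norm_nonneg (c * z)]
  have hsub : 1 - c * z ≠ 0 := fun h0 => by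
    rw [sub_eq_zero] at h0
    simp [← h0] at hlt
  have hadd : 1 + c * z ≠ 0 := fun h0 => by
    rw [add_eq_zero_iff_neg_eq] at h0
    simp [← h0] at hlt
  rw [mul_deriv_mobiusMul_div hz hsub hadd]
  exact one_add_re_pos_of_norm_lt_one (norm_two_mul_div_one_sub_sq_lt_one h)

theorem psi_starlike :
    ψ 0 = 0 ∧ deriv ψ 0 = 1 ∧
      ∀ z : ℂ, ‖z‖ < 1 → z ≠ 0 → 0 < (z * deriv ψ z / ψ z).re := by
  have hψ : ψ = mobiusMul (I / 3) := by
    funext z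
    simp only [ψ, mobiusMul]
    ring
  rw [hψ]
  refine ⟨by simp [mobiusMul], ?_, fun z hz hz0 => re_mul_deriv_mobiusMul_div_pos hz0 ?_⟩
  · simp [(hasDerivAt_mobiusMul (I / 3) 0 (by simp)).deriv]
  · have hw : ‖I / 3 * z‖ < 1 / 3 := by
      rw [norm_mul, norm_div, norm_I, Complex.norm_ofNat]
      linarith
    nlinarith [norm_nonneg (I / 3 * z)]
end

section
/- If |z| < √2 − 1, then |arg((1+z)/(1−z))| < π/4; equivalently, Re(((1+z)/(1−z))²) > 0 for |z| < √2 − 1. -/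
/-!
With `w = (1 + z) / (1 - z)` one has `|1 - z|² w = (1 - |z|²) + 2 i Im z`, so `|Im w| < Re w` as
soon as `2 |Im z| < 1 - |z|²`, which holds for `|z| < √2 - 1` because then `(|z| + 1)² < 2`.
Both conclusions only depend on `|Im w| < Re w`: it says that `w` lies in the open sector
`|arg w| < π / 4`, and `Re (w²) = (Re w)² - (Im w)²`.
-/

open Complex

theorem Real.abs_arctan_lt_pi_div_four {x : ℝ} (hx : |x| < 1) : |Real.arctan x| < Real.pi / 4 := by
  obtain ⟨hlo, hhi⟩ := abs_lt.1 hx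
  rw [abs_lt, ← Real.arctan_one, ← Real.arctan_neg]
  exact ⟨Real.arctan_strictMono hlo, Real.arctan_strictMono hhi⟩

namespace Complex

theorem arg_eq_arctan_of_re_pos {w : ℂ} (hw : 0 < w.re) : arg w = Real.arctan (w.im / w.re) := by
  obtain ⟨hlo, hhi⟩ := abs_lt.1 (abs_arg_lt_pi_div_two_iff.2 (Or.inl hw))
  rw [← tan_arg, Real.arctan_tan hlo hhi]

theorem abs_arg_lt_pi_div_four_of_abs_im_lt_re {w : ℂ} (hw : |w.im| < w.re) :
    |arg w| < Real.pi / 4 := by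
  have hre : 0 < w.re := (abs_nonneg _).trans_lt hw
  rw [arg_eq_arctan_of_re_pos hre]
  exact Real.abs_arctan_lt_pi_div_four (by rwa [abs_div, abs_of_pos hre, div_lt_one hre])

theorem re_sq_pos_of_abs_im_lt_re {w : ℂ} (hw : |w.im| < w.re) : 0 < (w ^ 2).re := by
  rw [sq, mul_re, sub_pos, ← sq, ← sq]
  exact sq_lt_sq.2 (hw.trans_le (le_abs_self _))

theorem re_one_add_div_one_sub (z : ℂ) :
    ((1 + z) / (1 - z)).re = (1 - ‖z‖ ^ 2) / normSq (1 - z) := by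
  rw [div_re, Complex.sq_norm, normSq_apply z]
  simp only [add_re, add_im, sub_re, sub_im, one_re, one_im]
  ring

theorem im_one_add_div_one_sub (z : ℂ) :
    ((1 + z) / (1 - z)).im = 2 * z.im / normSq (1 - z) := by
  rw [div_im]
  simp only [add_re, add_im, sub_re, sub_im, one_re, one_im]
  ring

theorem abs_im_lt_re_one_add_div_one_sub {z : ℂ} (hz : 2 * |z.im| < 1 - ‖z‖ ^ 2) :
    |((1 + z) / (1 - z)).im| < ((1 + z) / (1 - z)).re := by
  have hz1 : 1 - z ≠ 0 := by
    rintro h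
    rw [← eq_of_sub_eq_zero h] at hz
    simp at hz
  have hN : 0 < normSq (1 - z) := normSq_pos.2 hz1
  rw [re_one_add_div_one_sub, im_one_add_div_one_sub, abs_div, abs_of_pos hN, abs_mul, abs_two]
  exact div_lt_div_of_pos_right hz hN

theorem two_mul_abs_im_lt_one_sub_norm_sq {z : ℂ} (hz : ‖z‖ < √2 - 1) :
    2 * |z.im| < 1 - ‖z‖ ^ 2 := by
  have hsq : (‖z‖ + 1) ^ 2 < 2 := by
    simpa using pow_lt_pow_left₀ (lt_sub_iff_add_lt.1 hz) (by positivity) two_ne_zero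
  nlinarith [abs_im_le_norm z]

end Complex

theorem arg_lt_pi_div_four (z : ℂ) (hz : ‖z‖ < Real.sqrt 2 - 1) :
    |Complex.arg ((1 + z) / (1 - z))| < Real.pi / 4 ∧
      0 < ((((1 + z) / (1 - z)) ^ 2).re) := by
  have hw := abs_im_lt_re_one_add_div_one_sub (two_mul_abs_im_lt_one_sub_norm_sq hz)
  exact ⟨abs_arg_lt_pi_div_four_of_abs_im_lt_re hw, re_sq_pos_of_abs_im_lt_re hw⟩
end

section
/- Let f(z) = z h(z) conj(g(z)) with h, g analytic on U, and set φ(z) = z h(z) g(z) (nonvanishing except at 0). If f satisfies the logharmonic equation conj(f_z̄/f) = a·(f_z/f), then for z ≠ 0, Re((z f_z − z̄ f_z̄)/f) = Re(((1−a)/(1+a))·(zφ'/φ)). -/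
open Complex Metric

/-- Wirtinger derivative ∂/∂z of a real-differentiable map. -/
noncomputable def wDeriv (f : ℂ → ℂ) (z : ℂ) : ℂ :=
  (fderiv ℝ f z 1 - Complex.I * fderiv ℝ f z Complex.I) / 2

/-- Wirtinger derivative ∂/∂z̄ of a real-differentiable map. -/
noncomputable def wDerivBar (f : ℂ → ℂ) (z : ℂ) : ℂ :=
  (fderiv ℝ f z 1 + Complex.I * fderiv ℝ f z Complex.I) / 2

lemma wderiv_mul_conj (F G : ℂ → ℂ) (z : ℂ) (hF : DifferentiableAt ℂ F z)
    (hG : DifferentiableAt ℂ G z) :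
    wDeriv (fun w => F w * (starRingEnd ℂ) (G w)) z = deriv F z * (starRingEnd ℂ) (G z) ∧
    wDerivBar (fun w => F w * (starRingEnd ℂ) (G w)) z = F z * (starRingEnd ℂ) (deriv G z) := by
  have h1 : HasFDerivAt F (((1 : ℂ →L[ℂ] ℂ).smulRight (deriv F z)).restrictScalars ℝ) z :=
    (hF.hasDerivAt.hasFDerivAt).restrictScalars ℝ
  have h2 : HasFDerivAt (fun w => (starRingEnd ℂ) (G w))
      ((Complex.conjCLE : ℂ →L[ℝ] ℂ).comp
        (((1 : ℂ →L[ℂ] ℂ).smulRight (deriv G z)).restrictScalars ℝ)) z :=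
    (Complex.conjCLE : ℂ →L[ℝ] ℂ).hasFDerivAt.comp z
      ((hG.hasDerivAt.hasFDerivAt).restrictScalars ℝ)
  have h4 : fderiv ℝ (fun w => F w * (starRingEnd ℂ) (G w)) z = _ := (h1.mul h2).fderiv
  constructor <;>
  · simp only [wDeriv, wDerivBar, h4, ContinuousLinearMap.add_apply,
      ContinuousLinearMap.smul_apply, ContinuousLinearMap.coe_comp',
      ContinuousLinearMap.coe_restrictScalars', Function.comp_apply,
      ContinuousLinearMap.smulRight_apply, ContinuousLinearMap.one_apply,
      ContinuousLinearEquiv.coe_coe, Complex.conjCLE_apply, smul_eq_mul, map_mul, Complex.conj_I, mul_one, map_one]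
    ring_nf
    simp only [ContinuousLinearEquiv.coe_coe, Complex.conjCLE_apply, map_mul, Complex.conj_I, Complex.I_sq]
    ring

theorem starlikeness_identity
    (h g a : ℂ → ℂ)
    (hh : DifferentiableOn ℂ h (ball (0 : ℂ) 1))
    (hg : DifferentiableOn ℂ g (ball (0 : ℂ) 1))
    (ha : DifferentiableOn ℂ a (ball (0 : ℂ) 1))
    (hh0 : ∀ z ∈ ball (0 : ℂ) 1, h z ≠ 0)
    (hg0 : ∀ z ∈ ball (0 : ℂ) 1, g z ≠ 0)
    (ha1 : ∀ z ∈ ball (0 : ℂ) 1, a z ≠ -1)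
    (f : ℂ → ℂ) (hf : ∀ z, f z = z * h z * (starRingEnd ℂ) (g z))
    (φ : ℂ → ℂ) (hφ : ∀ z, φ z = z * h z * g z)
    (hlh : ∀ z ∈ ball (0 : ℂ) 1,
      (starRingEnd ℂ) (wDerivBar f z / f z) = a z * (wDeriv f z / f z)) :
    ∀ z ∈ ball (0 : ℂ) 1, z ≠ 0 →
      ((z * wDeriv f z - (starRingEnd ℂ) z * wDerivBar f z) / f z).re =
        (((1 - a z) / (1 + a z)) * (z * deriv φ z / φ z)).re := by
  intro z hz hz0
  have hhz : DifferentiableAt ℂ h z := hh.differentiableAt (isOpen_ball.mem_nhds hz)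
  have hgz : DifferentiableAt ℂ g z := hg.differentiableAt (isOpen_ball.mem_nhds hz)
  set F : ℂ → ℂ := fun w => w * h w with hFdef
  have hFd : HasDerivAt F (h z + z * deriv h z) z := by
    have := (hasDerivAt_id' z).mul hhz.hasDerivAt; simp only [one_mul] at this; exact this
  have hFz : DifferentiableAt ℂ F z := hFd.differentiableAt
  have hfe : f = fun w => F w * (starRingEnd ℂ) (g w) := funext fun w => hf w
  obtain ⟨hw1, hw2⟩ := wderiv_mul_conj F g z hFz hgz
  set F' := deriv F z with hF'
  have hFder : F' = h z + z * deriv h z := hFd.deriv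
  have hφd : HasDerivAt φ (F' * g z + F z * deriv g z) z := by
    have : HasDerivAt (fun w => F w * g w) (F' * g z + F z * deriv g z) z := by
      rw [hFder]; exact hFd.mul hgz.hasDerivAt
    exact this.congr_of_eventuallyEq (Filter.Eventually.of_forall fun w => by
      simp [hφ w, hFdef, mul_assoc])
  have hFne : F z ≠ 0 := mul_ne_zero hz0 (hh0 z hz)
  have hgne : g z ≠ 0 := hg0 z hz
  have hane : 1 + a z ≠ 0 := by
    intro hC
    exact ha1 z hz (by linear_combination hC)
  have hfz : f z = F z * (starRingEnd ℂ) (g z) := hf z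
  have hφz : φ z = F z * g z := hφ z
  have hcgne : (starRingEnd ℂ) (g z) ≠ 0 := by simpa using hgne
  -- key relation from the logharmonic equation
  have key := hlh z hz
  rw [hfe] at key
  simp only [hw1, hw2] at key
  have hcF : (starRingEnd ℂ) (F z) ≠ 0 := by simpa using hFne
  have key2 : deriv g z * F z = a z * F' * g z := by
    rw [map_div₀, map_mul, map_mul] at key
    simp only [Complex.conj_conj] at key
    field_simp at key
    have hcFe : (starRingEnd ℂ) (F z) = (starRingEnd ℂ) z * (starRingEnd ℂ) (h z) := by
      simp [hFdef]
    rw [← hcFe] at key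
    have hmain : (deriv g z * F z) * ((starRingEnd ℂ) (F z) * (starRingEnd ℂ) (g z)) =
        (a z * F' * g z) * ((starRingEnd ℂ) (F z) * (starRingEnd ℂ) (g z)) := by
      simp only [map_mul, Complex.conj_conj] at key
      linear_combination (starRingEnd ℂ) (g z) * key
    exact mul_right_cancel₀ (mul_ne_zero hcF hcgne) hmain
  set X := z * F' / F z with hX
  have hY : z * deriv g z / g z = a z * X := by
    rw [hX]; field_simp; linear_combination key2
  have hL : (z * wDeriv f z - (starRingEnd ℂ) z * wDerivBar f z) / f z
      = X - (starRingEnd ℂ) (z * deriv g z / g z) := by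
    rw [hfe]
    simp only [hw1, hw2, hX, map_div₀, map_mul]
    field_simp
  have hR : ((1 - a z) / (1 + a z)) * (z * deriv φ z / φ z)
      = X - a z * X := by
    rw [hφd.deriv, hφz, hX]
    field_simp
    have key2' : deriv g z * (z * h z) = a z * F' * g z := by
      simpa [hFdef] using key2
    linear_combination (1 - a z) * key2
  rw [hL, hR, hY]
  simp [Complex.sub_re, Complex.conj_re]
end

section
/- Let f(z) = z h(z) conj(g(z)) be a logharmonic mapping on U with h(0)=g(0)=1 and φ(z) = z h(z) g(z) typically real, with second dilatation a having real Taylor coefficients (a(conj z) = conj(a(z))). Then f has real coefficients in the sense f(conj(z)) = conj(f(z)) for all z ∈ U; in particular f(U) is symmetric with respect to the real axis. -/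
/-!
Write `k z = z h(z)`, so `f = k · conj g` and `φ = k g`, and let `G z = conj (g (conj z))`,
`K z = conj (k (conj z))`. Off the origin the logharmonic equation reads `g'/g = a k'/k`;
reflecting it, and using that `a` has real coefficients, gives `G'/G = a K'/K`. Since `φ` is real
on the real axis, the identity theorem gives `K G = φ = k g`, so `K'/K + G'/G = k'/k + g'/g`.
Together these force `(1 + a)(G'/G - g'/g) = 0`, hence `G'/G = g'/g` (at `0` by continuity),
and `G(0) = g(0) = 1` gives `G = g`. Then `K = k` as well, which is `f(z̄) = conj (f z)`.
-/

open Complex Metric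

/-- φ is typically real on the unit disk. -/
def TypicallyReal (φ : ℂ → ℂ) : Prop :=
  (∀ z ∈ ball (0 : ℂ) 1, z.im = 0 → (φ z).im = 0) ∧
  (∀ z ∈ ball (0 : ℂ) 1, z.im ≠ 0 → 0 < z.im * (φ z).im)

open ComplexConjugate Set Filter Topology

section Wirtinger

variable {F : ℂ → ℂ} {z p q : ℂ}

theorem wDeriv_eq_of_fderiv_apply (hF : ∀ v, fderiv ℝ F z v = p * v + q * conj v) :
    wDeriv F z = p := by
  simp only [wDeriv, hF, map_one, conj_I]
  linear_combination (q - p) / 2 * I_sq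

theorem wDerivBar_eq_of_fderiv_apply (hF : ∀ v, fderiv ℝ F z v = p * v + q * conj v) :
    wDerivBar F z = q := by
  simp only [wDerivBar, hF, map_one, conj_I]
  linear_combination (p - q) / 2 * I_sq

theorem fderiv_mul_conj_apply {k g : ℂ → ℂ} (hk : DifferentiableAt ℂ k z)
    (hg : DifferentiableAt ℂ g z) (v : ℂ) :
    fderiv ℝ (fun w => k w * conj (g w)) z v
      = deriv k z * conj (g z) * v + k z * conj (deriv g z) * conj v := by
  have hconj : HasFDerivAt (fun w => conj (g w))
      (conjCLE.toContinuousLinearMap.comp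
        (((1 : ℂ →L[ℂ] ℂ).smulRight (deriv g z)).restrictScalars ℝ)) z :=
    conjCLE.toContinuousLinearMap.hasFDerivAt.comp z
      (hg.hasDerivAt.hasFDerivAt.restrictScalars ℝ)
  have hF : HasFDerivAt (fun w => k w * conj (g w)) _ z :=
    (hk.hasDerivAt.hasFDerivAt.restrictScalars ℝ).mul hconj
  rw [hF.fderiv]
  simp only [add_apply, smul_apply, ContinuousLinearMap.comp_apply,
    ContinuousLinearMap.coe_restrictScalars', ContinuousLinearMap.smulRight_apply,
    one_apply_eq_self, smul_eq_mul, ContinuousLinearEquiv.coe_coe,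
    ContinuousAlgEquiv.coeCLE_apply, conjCAE_apply, map_mul,
    ContinuousLinearMap.toSpanSingleton_apply]
  ring

end Wirtinger

theorem logDeriv_conj_conj {𝕜 : Type*} [RCLike 𝕜] (f : 𝕜 → 𝕜) :
    logDeriv (conj ∘ f ∘ conj) = conj ∘ logDeriv f ∘ conj := by
  ext z
  simp [logDeriv_apply, deriv_conj_conj]

theorem DifferentiableOn.conj_conj {𝕜 : Type*} [RCLike 𝕜] {f : 𝕜 → 𝕜} {U : Set 𝕜} (hU : IsOpen U)
    (hU_conj : ∀ z ∈ U, conj z ∈ U) (hf : DifferentiableOn 𝕜 f U) :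
    DifferentiableOn 𝕜 (conj ∘ f ∘ conj) U := fun z hz =>
  (differentiableAt_conj_conj_iff.2
    (hf.differentiableAt (hU.mem_nhds (hU_conj z hz)))).differentiableWithinAt

theorem logDeriv_eq_mul_logDeriv_of_conj_wDerivBar {k g : ℂ → ℂ} {z α : ℂ}
    (hk : DifferentiableAt ℂ k z) (hg : DifferentiableAt ℂ g z) (hk0 : k z ≠ 0) (hg0 : g z ≠ 0)
    (h : conj (wDerivBar (fun w => k w * conj (g w)) z / (k z * conj (g z)))
      = α * (wDeriv (fun w => k w * conj (g w)) z / (k z * conj (g z)))) :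
    logDeriv g z = α * logDeriv k z := by
  have hF := fderiv_mul_conj_apply hk hg
  rw [wDerivBar_eq_of_fderiv_apply hF, wDeriv_eq_of_fderiv_apply hF] at h
  have hcg0 : conj (g z) ≠ 0 := (map_ne_zero _).2 hg0
  rw [mul_div_mul_left _ _ hk0, mul_div_mul_right _ _ hcg0, map_div₀, conj_conj, conj_conj] at h
  simpa only [logDeriv_apply] using h

theorem DifferentiableOn.conj_conj_eqOn_ball {F : ℂ → ℂ} {r : ℝ}
    (hF : DifferentiableOn ℂ F (ball 0 r)) (hreal : ∀ z ∈ ball (0 : ℂ) r, z.im = 0 → (F z).im = 0) :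
    EqOn (conj ∘ F ∘ conj) F (ball 0 r) := by
  intro z hz
  have hr : 0 < r := pos_of_mem_ball hz
  have hF' := hF.conj_conj isOpen_ball (by simp)
  have hreal_near : ∀ᶠ x : ℝ in 𝓝[≠] 0, (conj ∘ F ∘ conj) x = F x := by
    have : ∀ᶠ x : ℝ in 𝓝 0, (x : ℂ) ∈ ball (0 : ℂ) r :=
      continuous_ofReal.continuousAt.preimage_mem_nhds (by simpa using ball_mem_nhds 0 hr)
    filter_upwards [nhdsWithin_le_nhds this] with x hx
    simp [conj_eq_iff_im.2 (hreal x hx (ofReal_im x))]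
  have hofReal : Tendsto ((↑) : ℝ → ℂ) (𝓝[≠] 0) (𝓝[≠] 0) :=
    continuous_ofReal.continuousWithinAt.tendsto_nhdsWithin fun _ _ ↦ by simp_all
  exact (hF'.analyticOnNhd isOpen_ball).eqOn_of_preconnected_of_frequently_eq
    (hF.analyticOnNhd isOpen_ball) (convex_ball 0 r).isPreconnected (mem_ball_self hr)
    (hofReal.frequently hreal_near.frequently) hz

theorem eqOn_of_logDeriv_eqOn {𝕜 : Type*} [RCLike 𝕜] {f g : 𝕜 → 𝕜} {U : Set 𝕜}
    (hU : IsOpen U) (hU' : IsPreconnected U) (hf : DifferentiableOn 𝕜 f U)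
    (hg : DifferentiableOn 𝕜 g U) (hf0 : ∀ z ∈ U, f z ≠ 0) (hg0 : ∀ z ∈ U, g z ≠ 0)
    (hfg : EqOn (logDeriv f) (logDeriv g) U) {c : 𝕜} (hc : c ∈ U) (hfgc : f c = g c) :
    EqOn f g U := by
  have hderiv : EqOn (deriv (f / g)) 0 U := by
    intro z hz
    have hfz := hf.differentiableAt (hU.mem_nhds hz)
    have hgz := hg.differentiableAt (hU.mem_nhds hz)
    have := hfg hz
    simp only [logDeriv_apply] at this
    have hd : HasDerivAt (f / g) _ z := hfz.hasDerivAt.div hgz.hasDerivAt (hg0 z hz)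
    rw [hd.deriv, Pi.zero_apply, div_eq_zero_iff]
    left
    field_simp [hf0 z hz, hg0 z hz] at this
    linear_combination this
  intro z hz
  have := hU.is_const_of_deriv_eq_zero hU' (hf.div hg hg0) hderiv hz hc
  rwa [Pi.div_apply, Pi.div_apply, hfgc, div_self (hg0 c hc), div_eq_one_iff_eq (hg0 z hz)] at this

theorem Set.EqOn.of_sdiff_singleton {X Y : Type*} [TopologicalSpace X] [TopologicalSpace Y]
    [T2Space Y] {f g : X → Y} {U : Set X} {c : X} [(𝓝[≠] c).NeBot] (hU : IsOpen U)
    (hf : ContinuousOn f U) (hg : ContinuousOn g U) (hfg : EqOn f g (U \ {c})) :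
    EqOn f g U := by
  intro z hz
  by_cases hzc : z = c
  · subst hzc
    refine Filter.EventuallyEq.eq_of_nhds ?_
    rw [← (hf.continuousAt (hU.mem_nhds hz)).eventuallyEq_nhds_iff_eventuallyEq_nhdsNE
      (hg.continuousAt (hU.mem_nhds hz))]
    exact Filter.mem_of_superset (sdiff_mem_nhdsWithin_compl (hU.mem_nhds hz) {z}) hfg
  · exact hfg ⟨hz, hzc⟩

theorem DifferentiableOn.continuousOn_logDeriv {f : ℂ → ℂ} {U : Set ℂ} (hf : DifferentiableOn ℂ f U)
    (hU : IsOpen U) (hf0 : ∀ z ∈ U, f z ≠ 0) : ContinuousOn (logDeriv f) U :=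
  (hf.deriv hU).continuousOn.div hf.continuousOn hf0

theorem eqOn_logDeriv_conj_conj_of_logDeriv_eq_mul {k g a : ℂ → ℂ} {U : Set ℂ} (hU : IsOpen U)
    (hU_conj : ∀ z ∈ U, conj z ∈ U) (hk : DifferentiableOn ℂ k U) (hg : DifferentiableOn ℂ g U)
    (hk0 : ∀ z ∈ U, k z ≠ 0) (hg0 : ∀ z ∈ U, g z ≠ 0) (ha1 : ∀ z ∈ U, a z ≠ -1)
    (ha_conj : ∀ z ∈ U, a (conj z) = conj (a z))
    (hlog : ∀ z ∈ U, logDeriv g z = a z * logDeriv k z)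
    (hkg : EqOn (conj ∘ (fun w => k w * g w) ∘ conj) (fun w => k w * g w) U) :
    EqOn (logDeriv (conj ∘ g ∘ conj)) (logDeriv g) U := by
  intro z hz
  have hz' := hU_conj z hz
  have hlog_kg : ∀ {w}, w ∈ U → logDeriv (fun w => k w * g w) w = logDeriv k w + logDeriv g w :=
    fun hw => logDeriv_mul _ (hk0 _ hw) (hg0 _ hw) (hk.differentiableAt (hU.mem_nhds hw))
      (hg.differentiableAt (hU.mem_nhds hw))
  have hlog_conj : conj (logDeriv g (conj z)) = a z * conj (logDeriv k (conj z)) := by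
    rw [hlog _ hz', map_mul, ha_conj z hz, conj_conj]
  have hsum : conj (logDeriv k (conj z)) + conj (logDeriv g (conj z))
      = logDeriv k z + logDeriv g z := by
    have := (logDeriv_congr_nhds (hkg.eventuallyEq_of_mem (hU.mem_nhds hz))).eq_of_nhds
    rwa [logDeriv_conj_conj, Function.comp_apply, Function.comp_apply, hlog_kg hz', map_add,
      hlog_kg hz] at this
  have h1a : 1 + a z ≠ 0 := fun h => ha1 z hz (by linear_combination h)
  rw [logDeriv_conj_conj, Function.comp_apply, Function.comp_apply]
  -- Subtracting `hlog` at `z` from `hlog_conj` gives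
  -- `conj L_g(z̄) - L_g(z) = a (conj L_k(z̄) - L_k(z))`,
  -- which by `hsum` is `a (L_g(z) - conj L_g(z̄))`.
  refine mul_left_cancel₀ h1a ?_
  linear_combination hlog_conj - hlog z hz + a z * hsum

theorem mul_conj_apply_conj {k g : ℂ → ℂ} {z : ℂ} (hg0 : g z ≠ 0)
    (hg : g (conj z) = conj (g z)) (hkg : k (conj z) * g (conj z) = conj (k z * g z)) :
    k (conj z) * conj (g (conj z)) = conj (k z * conj (g z)) := by
  rw [hg, map_mul] at hkg
  rw [mul_right_cancel₀ ((map_ne_zero _).2 hg0) hkg, hg, map_mul, conj_conj]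

theorem symmetric_image_general
    (h g a : ℂ → ℂ)
    (hh : DifferentiableOn ℂ h (ball (0 : ℂ) 1))
    (hg : DifferentiableOn ℂ g (ball (0 : ℂ) 1))
    (hh0 : ∀ z ∈ ball (0 : ℂ) 1, h z ≠ 0)
    (hg0 : ∀ z ∈ ball (0 : ℂ) 1, g z ≠ 0)
    (hgone : g 0 = 1)
    (ha1 : ∀ z ∈ ball (0 : ℂ) 1, a z ≠ -1)
    (haR : ∀ z ∈ ball (0 : ℂ) 1, a ((starRingEnd ℂ) z) = (starRingEnd ℂ) (a z))
    (f : ℂ → ℂ) (hf : ∀ z, f z = z * h z * (starRingEnd ℂ) (g z))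
    (hlh : ∀ z ∈ ball (0 : ℂ) 1,
      (starRingEnd ℂ) (wDerivBar f z / f z) = a z * (wDeriv f z / f z))
    (φ : ℂ → ℂ) (hφ : ∀ z, φ z = z * h z * g z)
    (hTR : TypicallyReal φ) :
    ∀ z ∈ ball (0 : ℂ) 1, f ((starRingEnd ℂ) z) = (starRingEnd ℂ) (f z) := by
  set B := ball (0 : ℂ) 1
  set k : ℂ → ℂ := fun w => w * h w
  set G := conj ∘ g ∘ conj
  have hconj_mem : ∀ z ∈ B, conj z ∈ B := by simp [B]
  have hk : DifferentiableOn ℂ k B := differentiableOn_id.mul hh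
  have hφk : φ = fun w => k w * g w := funext hφ
  have hG : DifferentiableOn ℂ G B := hg.conj_conj isOpen_ball hconj_mem
  have hG0 : ∀ z ∈ B, G z ≠ 0 := fun z hz => (map_ne_zero _).2 (hg0 _ (hconj_mem z hz))
  have hlog : ∀ z ∈ B \ {0}, logDeriv g z = a z * logDeriv k z := by
    rintro z ⟨hz, hz0 : z ≠ 0⟩
    have hlhz := hlh z hz
    rw [show f = fun w => k w * conj (g w) from funext hf] at hlhz
    exact logDeriv_eq_mul_logDeriv_of_conj_wDerivBar
      (hk.differentiableAt (isOpen_ball.mem_nhds hz))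
      (hg.differentiableAt (isOpen_ball.mem_nhds hz))
      (mul_ne_zero hz0 (hh0 z hz)) (hg0 z hz) hlhz
  have hφsym : EqOn (conj ∘ φ ∘ conj) φ B :=
    (hφk ▸ hk.mul hg : DifferentiableOn ℂ φ B).conj_conj_eqOn_ball hTR.1
  have hLG : EqOn (logDeriv G) (logDeriv g) (B \ {0}) := by
    refine eqOn_logDeriv_conj_conj_of_logDeriv_eq_mul (isOpen_ball.sdiff isClosed_singleton)
      ?_ (hk.mono sdiff_subset) (hg.mono sdiff_subset) (fun z hz => mul_ne_zero hz.2 (hh0 z hz.1))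
      (fun z hz => hg0 z hz.1) (fun z hz => ha1 z hz.1) (fun z hz => haR z hz.1)
      hlog (hφk ▸ hφsym.mono sdiff_subset)
    rintro z ⟨hz, hz0 : z ≠ 0⟩
    exact ⟨hconj_mem z hz, (map_ne_zero _).2 hz0⟩
  have hGg : EqOn G g B :=
    eqOn_of_logDeriv_eqOn isOpen_ball (convex_ball 0 1).isPreconnected hG hg hG0 hg0
      (hLG.of_sdiff_singleton isOpen_ball (hG.continuousOn_logDeriv isOpen_ball hG0)
        (hg.continuousOn_logDeriv isOpen_ball hg0))
      (mem_ball_self one_pos) (by simp [G, hgone])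
  intro z hz
  rw [hf, hf]
  refine mul_conj_apply_conj (k := k) (hg0 z hz) ?_ ?_
  · simpa [G] using congrArg conj (hGg hz)
  · simpa [hφk] using congrArg conj (hφsym hz)

theorem symmetric_image
    (h g a : ℂ → ℂ)
    (hh : DifferentiableOn ℂ h (ball (0 : ℂ) 1))
    (hg : DifferentiableOn ℂ g (ball (0 : ℂ) 1))
    (ha : DifferentiableOn ℂ a (ball (0 : ℂ) 1))
    (hh0 : ∀ z ∈ ball (0 : ℂ) 1, h z ≠ 0)
    (hg0 : ∀ z ∈ ball (0 : ℂ) 1, g z ≠ 0)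
    (hhone : h 0 = 1) (hgone : g 0 = 1)
    (hamap : ∀ z ∈ ball (0 : ℂ) 1, ‖a z‖ < 1)
    (ha1 : ∀ z ∈ ball (0 : ℂ) 1, a z ≠ -1)
    (haR : ∀ z ∈ ball (0 : ℂ) 1, a ((starRingEnd ℂ) z) = (starRingEnd ℂ) (a z))
    (f : ℂ → ℂ) (hf : ∀ z, f z = z * h z * (starRingEnd ℂ) (g z))
    (hlh : ∀ z ∈ ball (0 : ℂ) 1,
      (starRingEnd ℂ) (wDerivBar f z / f z) = a z * (wDeriv f z / f z))
    (φ : ℂ → ℂ) (hφ : ∀ z, φ z = z * h z * g z)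
    (hTR : TypicallyReal φ) :
    ∀ z ∈ ball (0 : ℂ) 1, f ((starRingEnd ℂ) z) = (starRingEnd ℂ) (f z) :=
  symmetric_image_general h g a hh hg hh0 hg0 hgone ha1 haR f hf hlh φ hφ hTR
end
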